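/- arXiv:math/0207178 — 2 statements merged into one kernel-verified Lean document; each statement's English description precedes it below -/
import Mathlib

section
/- Let 𝔄 be an additive category closed under finite limits and finite colimits with a class 𝔍 of basic objects. Suppose given cofibrations α : C → A, β : C → B, i : A → X, j : B → X with i∘α = j∘β, and suppose that the induced map j̄ : B/C → X/A between the cokernels of α and i is also a cofibration. Then the induced map A ∐_C B → X from the pushout of α and β to X is a cofibration. -/
open CategoryTheory CategoryTheory.Limits

universe v u

/-- A morphism `i : X ⟶ Y` is a *cofibration* with respect to the class `J` of basic objects
if `Hom(i, I)` is surjective for every basic object `I ∈ J`. -/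
def IsCofib {𝔄 : Type u} [Category.{v} 𝔄] (J : Set 𝔄) {X Y : 𝔄} (i : X ⟶ Y) : Prop :=
  ∀ I ∈ J, Function.Surjective (fun g : Y ⟶ I => i ≫ g)

/-- Lemma 4.3 (prerel1): in an additive category with finite limits and colimits, given
cofibrations `α, β, i, j` forming a commutative square `α ≫ i = β ≫ j`, if the induced map
`B/C → X/A` between the cokernels of `β` and `i` is a cofibration, then the induced map
`A ∐_C B → X` from the pushout is a cofibration. -/
theorem stmt0 {𝔄 : Type u} [Category.{v} 𝔄] [Preadditive 𝔄]
    [HasFiniteLimits 𝔄] [HasFiniteColimits 𝔄] (J : Set 𝔄)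
    {C A B X : 𝔄} (α : C ⟶ A) (β : C ⟶ B) (i : A ⟶ X) (j : B ⟶ X)
    (w : α ≫ i = β ≫ j)
    (hα : IsCofib J α) (hβ : IsCofib J β) (hi : IsCofib J i) (hj : IsCofib J j)
    (hbar : IsCofib J (cokernel.map β i α j w.symm)) :
    IsCofib J (pushout.desc i j w) := by
  intro I hI h
  -- components of h
  set a : A ⟶ I := pushout.inl α β ≫ h with ha
  set b : B ⟶ I := pushout.inr α β ≫ h with hb
  have hab : α ≫ a = β ≫ b := by
    simp only [ha, hb, ← Category.assoc, pushout.condition]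
  -- lift a through i
  obtain ⟨g₀, hg₀⟩ := hi I hI a
  simp only at hg₀
  -- defect on B kills β
  have hdef : β ≫ (j ≫ g₀ - b) = 0 := by
    have : β ≫ j ≫ g₀ = α ≫ a := by rw [← hg₀, ← Category.assoc, ← w, Category.assoc]
    simp [Preadditive.comp_sub, this, hab]
  -- factor through cokernel β
  let φ : cokernel β ⟶ I := cokernel.desc β (j ≫ g₀ - b) hdef
  obtain ⟨ψ, hψ⟩ := hbar I hI φ
  simp only at hψ
  refine ⟨g₀ - cokernel.π i ≫ ψ, ?_⟩
  simp only
  apply pushout.hom_ext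
  · rw [← Category.assoc, pushout.inl_desc, Preadditive.comp_sub, ← Category.assoc,
      cokernel.condition, zero_comp, sub_zero, hg₀]
  · rw [← Category.assoc, pushout.inr_desc, Preadditive.comp_sub]
    have h1 : j ≫ cokernel.π i = cokernel.π β ≫ cokernel.map β i α j w.symm := by
      simp [cokernel.map]
    rw [← Category.assoc, h1, Category.assoc, hψ]
    have : cokernel.π β ≫ φ = j ≫ g₀ - b := cokernel.π_desc _ _ _
    rw [this]
    exact sub_sub_cancel _ _
end

section
/- Let S ↪ M and T ↪ N be cofibrations in 𝔄. Then the sequence (S⊗N) ∐_{S⊗T} (M⊗T) → M⊗N → (M/S)⊗(N/T) is a cofibration sequence: the canonical map from the pushout (S⊗N) ∐_{S⊗T} (M⊗T) to M⊗N is a cofibration, and the induced map M⊗N → (M/S)⊗(N/T) is its cokernel. -/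
open CategoryTheory CategoryTheory.Limits MonoidalCategory

universe v u

variable {𝔄 : Type u} [Category.{v} 𝔄] [Preadditive 𝔄]
    [HasFiniteLimits 𝔄] [HasFiniteColimits 𝔄] [MonoidalCategory 𝔄]

/-- The canonical map `S⊗N ∐_{S⊗T} M⊗T ⟶ M⊗N` induced by `s : S ⟶ M` and `t : T ⟶ N`. -/
noncomputable def pushoutToTensor {S M T N : 𝔄} (s : S ⟶ M) (t : T ⟶ N) :
    pushout (S ◁ t) (s ▷ T) ⟶ M ⊗ N :=
  pushout.desc (s ▷ N) (M ◁ t) (whisker_exchange s t)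

/-- The induced map `M⊗N ⟶ (M/S)⊗(N/T)` to the tensor product of the cokernels. -/
noncomputable def tensorOfQuotients {S M T N : 𝔄} (s : S ⟶ M) (t : T ⟶ N) :
    M ⊗ N ⟶ cokernel s ⊗ cokernel t :=
  MonoidalCategoryStruct.tensorHom (cokernel.π s) (cokernel.π t)

/-- `cokernel.π f ▷ V` is the cokernel of `f ▷ V` when `tensorRight V` preserves cokernels. -/
lemma zeroWhiskerRight (V : 𝔄) {X Y : 𝔄} [(tensorRight V).Additive] :
    (0 : X ⟶ Y) ▷ V = 0 := by
  exact (tensorRight V).map_zero X Y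

lemma whiskerLeftZero (V : 𝔄) {X Y : 𝔄} [(tensorLeft V).Additive] :
    V ◁ (0 : X ⟶ Y) = 0 := by
  exact (tensorLeft V).map_zero X Y

lemma exFacRight (V : 𝔄) {X Y : 𝔄} (f : X ⟶ Y) [(tensorRight V).Additive]
    [PreservesColimitsOfShape WalkingParallelPair (tensorRight V)]
    {W : 𝔄} (g : Y ⊗ V ⟶ W) (hg : f ▷ V ≫ g = 0) :
    ∃ h : cokernel f ⊗ V ⟶ W, cokernel.π f ▷ V ≫ h = g := by
  have l := isColimitOfHasCokernelOfPreservesColimit (tensorRight V) f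
  obtain ⟨h, hh⟩ := CokernelCofork.IsColimit.desc' l g (by simpa using hg)
  exact ⟨h, by simpa using hh⟩

lemma exFacLeft (V : 𝔄) {X Y : 𝔄} (f : X ⟶ Y) [(tensorLeft V).Additive]
    [PreservesColimitsOfShape WalkingParallelPair (tensorLeft V)]
    {W : 𝔄} (g : V ⊗ Y ⟶ W) (hg : V ◁ f ≫ g = 0) :
    ∃ h : V ⊗ cokernel f ⟶ W, V ◁ cokernel.π f ≫ h = g := by
  have l := isColimitOfHasCokernelOfPreservesColimit (tensorLeft V) f
  obtain ⟨h, hh⟩ := CokernelCofork.IsColimit.desc' l g (by simpa using hg)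
  exact ⟨h, by simpa using hh⟩

lemma epiRight (V : 𝔄) {X Y : 𝔄} (f : X ⟶ Y) [(tensorRight V).Additive]
    [PreservesColimitsOfShape WalkingParallelPair (tensorRight V)] :
    Epi (cokernel.π f ▷ V) := by
  have := epi_of_isColimit_cofork (isColimitOfHasCokernelOfPreservesColimit (tensorRight V) f)
  simpa using this

lemma epiLeft (V : 𝔄) {X Y : 𝔄} (f : X ⟶ Y) [(tensorLeft V).Additive]
    [PreservesColimitsOfShape WalkingParallelPair (tensorLeft V)] :
    Epi (V ◁ cokernel.π f) := by
  have := epi_of_isColimit_cofork (isColimitOfHasCokernelOfPreservesColimit (tensorLeft V) f)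
  simpa using this

/-- Lemma (prerel2): if `s : S ↪ M` and `t : T ↪ N` are cofibrations in a `(𝔄, 𝔍)` with a
tensor product (a symmetric monoidal structure, additive and cokernel-preserving and
cofibration-preserving in each variable), then
`S⊗N ∐_{S⊗T} M⊗T → M⊗N → (M/S)⊗(N/T)` is a cofibration sequence: the canonical map from the
pushout to `M ⊗ N` is a cofibration, and the induced map `M⊗N ⟶ (M/S)⊗(N/T)` is its cokernel. -/
theorem stmt1 [SymmetricCategory 𝔄] (J : Set 𝔄)
    -- the tensor product is additive in each variable
    [∀ V : 𝔄, (tensorLeft V).Additive] [∀ V : 𝔄, (tensorRight V).Additive]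
    -- the tensor product preserves all cokernels in each variable
    [∀ V : 𝔄, PreservesColimitsOfShape WalkingParallelPair (tensorLeft V)]
    [∀ V : 𝔄, PreservesColimitsOfShape WalkingParallelPair (tensorRight V)]
    -- the tensor product preserves cofibrations in each variable
    (hwl : ∀ (V : 𝔄) {X Y : 𝔄} (f : X ⟶ Y), IsCofib J f → IsCofib J (V ◁ f))
    (hwr : ∀ (V : 𝔄) {X Y : 𝔄} (f : X ⟶ Y), IsCofib J f → IsCofib J (f ▷ V))
    {S M T N : 𝔄} (s : S ⟶ M) (t : T ⟶ N) (hs : IsCofib J s) (ht : IsCofib J t) :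
    IsCofib J (pushoutToTensor s t) ∧
    ∃ hz : pushoutToTensor s t ≫ tensorOfQuotients s t = 0,
      Nonempty (IsColimit (CokernelCofork.ofπ (tensorOfQuotients s t) hz)) := by
  have hinl : pushout.inl (S ◁ t) (s ▷ T) ≫ pushoutToTensor s t = s ▷ N := by
    unfold pushoutToTensor; exact pushout.inl_desc _ _ _
  have hinr : pushout.inr (S ◁ t) (s ▷ T) ≫ pushoutToTensor s t = M ◁ t := by
    unfold pushoutToTensor; exact pushout.inr_desc _ _ _
  constructor
  · -- cofibration
    intro I hI φ
    set a : S ⊗ N ⟶ I := pushout.inl (S ◁ t) (s ▷ T) ≫ φ with ha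
    set b : M ⊗ T ⟶ I := pushout.inr (S ◁ t) (s ▷ T) ≫ φ with hb
    have hab : S ◁ t ≫ a = s ▷ T ≫ b := by
      rw [ha, hb, ← Category.assoc, ← Category.assoc, pushout.condition]
    obtain ⟨h₁, hh₁⟩ := hwr N s hs I hI a
    dsimp at hh₁
    set c : M ⊗ T ⟶ I := b - M ◁ t ≫ h₁ with hc
    have hc0 : s ▷ T ≫ c = 0 := by
      rw [hc, Preadditive.comp_sub, ← whisker_exchange_assoc s t, hh₁, ← hab, sub_self]
    obtain ⟨cbar, hcbar⟩ := exFacRight T s c hc0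
    obtain ⟨d, hd⟩ := hwl (cokernel s) t ht I hI cbar
    dsimp at hd
    refine ⟨h₁ + cokernel.π s ▷ N ≫ d, ?_⟩
    dsimp only
    apply pushout.hom_ext
    · rw [reassoc_of% hinl, Preadditive.comp_add, hh₁,
        ← comp_whiskerRight_assoc, cokernel.condition, zeroWhiskerRight, zero_comp, add_zero]
    · rw [reassoc_of% hinr, Preadditive.comp_add,
        whisker_exchange_assoc (cokernel.π s) t, hd, hcbar, hc, add_sub_cancel]
  · -- cokernel sequence
    have hz : pushoutToTensor s t ≫ tensorOfQuotients s t = 0 := by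
      apply pushout.hom_ext
      · rw [reassoc_of% hinl, comp_zero, tensorOfQuotients, MonoidalCategory.tensorHom_def,
          ← comp_whiskerRight_assoc, cokernel.condition, zeroWhiskerRight, zero_comp]
      · rw [reassoc_of% hinr, comp_zero, tensorOfQuotients, tensorHom_def',
          ← MonoidalCategory.whiskerLeft_comp_assoc, cokernel.condition,
          whiskerLeftZero, zero_comp]
    refine ⟨hz, ?_⟩
    have key : ∀ {A : 𝔄} (k : M ⊗ N ⟶ A), pushoutToTensor s t ≫ k = 0 →
        ∃ l : cokernel s ⊗ cokernel t ⟶ A, tensorOfQuotients s t ≫ l = k := by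
      intro A k hk
      have hk1 : s ▷ N ≫ k = 0 := by
        rw [← hinl, Category.assoc, hk, comp_zero]
      have hk2 : M ◁ t ≫ k = 0 := by
        rw [← hinr, Category.assoc, hk, comp_zero]
      obtain ⟨k₁, hk₁⟩ := exFacRight N s k hk1
      have hmid : cokernel s ◁ t ≫ k₁ = 0 := by
        haveI := epiRight T s
        rw [← cancel_epi (cokernel.π s ▷ T), ← whisker_exchange_assoc (cokernel.π s) t,
          hk₁, hk2, comp_zero]
      obtain ⟨l, hl⟩ := exFacLeft (cokernel s) t k₁ hmid
      refine ⟨l, ?_⟩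
      rw [tensorOfQuotients, MonoidalCategory.tensorHom_def, Category.assoc, hl, hk₁]
    haveI : Epi (tensorOfQuotients s t) := by
      rw [tensorOfQuotients, MonoidalCategory.tensorHom_def]
      haveI := epiRight N s
      haveI := epiLeft (cokernel s) t
      exact epi_comp _ _
    exact ⟨CokernelCofork.IsColimit.ofπ' _ _
      (fun {A} k hk => ⟨(key k hk).choose, (key k hk).choose_spec⟩)⟩
end
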